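/- arXiv:2106.07808 — 3 statements merged into one kernel-verified Lean document; each statement's English description precedes it below -/
import Mathlib

section
/- Suppose B ⊆ ℕ admits increasing functions f: ℕ → ℕ and g: ℕ → ℝ_{≥0} with f(a)/a → 0 as a → ∞, and for all sufficiently large a, any b_t, b_s ∈ B with f(a) < b_t < b_s satisfy b_s − b_t ≥ a + g(a). Then B has asymptotic density 0. -/
open Filter Set Pointwise

open scoped Classical in
/-- Number of elements of `S` in `[1, n]`. -/
noncomputable def cnt (S : Set ℕ) (n : ℕ) : ℕ :=
  ((Finset.Icc 1 n).filter (fun x => x ∈ S)).card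

/-- `S` has asymptotic density `α`. -/
def HasDensity (S : Set ℕ) (α : ℝ) : Prop :=
  Tendsto (fun n => (cnt S n : ℝ) / n) atTop (nhds α)

/-- Lower asymptotic density. -/
noncomputable def dLow (S : Set ℕ) : ℝ := liminf (fun n => (cnt S n : ℝ) / n) atTop

/-- Upper asymptotic density. -/
noncomputable def dUpp (S : Set ℕ) : ℝ := limsup (fun n => (cnt S n : ℝ) / n) atTop

/-- Increasing enumeration of a set of naturals. -/
noncomputable def enum (B : Set ℕ) : ℕ → ℕ := Nat.nth (· ∈ B)

/-- `B` is highly sparse: finite, or consecutive-element ratios tend to infinity. -/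
def HighlySparse (B : Set ℕ) : Prop :=
  B.Finite ∨ Tendsto (fun j => (enum B (j + 1) : ℝ) / enum B j) atTop atTop

/-- `(f, g)` is a pair of sparseness rates (PSR) of `B`. -/
def IsPSR (B : Set ℕ) (f : ℕ → ℕ) (g : ℕ → ℝ) : Prop :=
  Monotone f ∧ Monotone g ∧ (∀ a, 0 ≤ g a) ∧
  Tendsto (fun a => (f a : ℝ) / a) atTop (nhds 0) ∧
  ∀ᶠ a in atTop, ∀ bt bs, bt ∈ B → bs ∈ B → f a < bt → bt < bs →
    (a : ℝ) + g a ≤ (bs : ℝ) - (bt : ℝ)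

lemma gap_count (B : Set ℕ) (a m n : ℕ) (ha : 0 < a)
    (h : ∀ x y, x ∈ B → y ∈ B → m < x → x < y → a ≤ y - x) :
    cnt B n ≤ m + (n / a + 1) := by
  classical
  unfold cnt
  set S := (Finset.Icc 1 n).filter (fun x => x ∈ B) with hS
  have hsplit : (S.filter (fun x => x ≤ m)).card + (S.filter (fun x => ¬ x ≤ m)).card
      = S.card := Finset.card_filter_add_card_filter_not _
  have h1 : (S.filter (fun x => x ≤ m)).card ≤ m := by
    have hsub : S.filter (fun x => x ≤ m) ⊆ Finset.Icc 1 m := by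
      intro x hx
      simp only [hS, Finset.mem_filter, Finset.mem_Icc] at hx ⊢
      exact ⟨hx.1.1.1, hx.2⟩
    calc (S.filter (fun x => x ≤ m)).card ≤ (Finset.Icc 1 m).card :=
          Finset.card_le_card hsub
      _ = m := by simp
  have key : ∀ x y, x ∈ B → y ∈ B → m < x → x < y →
      (x - (m+1)) / a < (y - (m+1)) / a := by
    intro x y hxB hyB hmx hlt
    have hga := h x y hxB hyB hmx hlt
    have hadd : (x - (m+1)) + a ≤ y - (m+1) := by omega
    calc (x - (m+1))/a < (x - (m+1))/a + 1 := Nat.lt_succ_self _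
      _ = ((x - (m+1)) + a)/a := (Nat.add_div_right _ ha).symm
      _ ≤ (y - (m+1))/a := Nat.div_le_div_right hadd
  have h2 : (S.filter (fun x => ¬ x ≤ m)).card ≤ n / a + 1 := by
    have := Finset.card_le_card_of_injOn (s := S.filter (fun x => ¬ x ≤ m))
      (f := fun x => (x - (m+1)) / a)
      (t := Finset.range (n / a + 1)) ?_ ?_
    · simpa using this
    · intro x hx
      simp only [hS, Finset.mem_filter, Finset.mem_Icc, Finset.mem_range,
        Finset.mem_coe] at hx ⊢
      have hxn : x - (m+1) ≤ n := le_trans (Nat.sub_le _ _) hx.1.1.2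
      exact lt_of_le_of_lt (Nat.div_le_div_right hxn) (Nat.lt_succ_self _)
    · intro x hx y hy hxy
      simp only [hS, Finset.mem_filter, Finset.mem_Icc, Finset.mem_coe,
        not_le] at hx hy
      rcases lt_trichotomy x y with hlt | heq | hgt
      · exact absurd hxy (ne_of_lt (key x y hx.1.2 hy.1.2 hx.2 hlt))
      · exact heq
      · exact absurd hxy.symm (ne_of_lt (key y x hy.1.2 hx.1.2 hy.2 hgt))
  omega

theorem stmt6 (B : Set ℕ) (f : ℕ → ℕ) (g : ℕ → ℝ) (hPSR : IsPSR B f g) :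
    HasDensity B 0 := by
  obtain ⟨hf, hg, hg0, hf0, hev⟩ := hPSR
  rw [HasDensity, Metric.tendsto_atTop]
  intro ε hε
  obtain ⟨a₀, ha₀⟩ := eventually_atTop.mp hev
  set a : ℕ := max a₀ ⌈2/ε⌉₊ + 1 with ha
  have hapos : 0 < a := Nat.succ_pos _
  have haR : (0:ℝ) < a := by exact_mod_cast hapos
  have h2a : 2 < (a:ℝ) * ε := by
    have h1 : (2/ε : ℝ) ≤ ⌈2/ε⌉₊ := Nat.le_ceil _
    have h2 : (⌈2/ε⌉₊ : ℝ) < a := by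
      have : ⌈2/ε⌉₊ < a := by omega
      exact_mod_cast this
    have h3 : (2/ε : ℝ) < a := lt_of_le_of_lt h1 h2
    calc (2:ℝ) = 2/ε * ε := by field_simp
      _ < a * ε := by exact mul_lt_mul_of_pos_right h3 hε
  have haε : (1:ℝ)/a < ε/2 := by
    rw [div_lt_div_iff₀ haR two_pos]
    linarith
  have hgap : ∀ x y, x ∈ B → y ∈ B → f a < x → x < y → a ≤ y - x := by
    intro x y hx hy hfx hxy
    have hle := ha₀ a (le_trans (le_max_left _ _) (Nat.le_succ _)) x y hx hy hfx hxy
    have h0 := hg0 a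
    have hle' : (a:ℝ) ≤ ((y - x : ℕ) : ℝ) := by
      rw [Nat.cast_sub hxy.le]; linarith
    exact_mod_cast hle'
  have hcnt : ∀ n, cnt B n ≤ f a + (n/a + 1) := fun n =>
    gap_count B a (f a) n hapos hgap
  set N : ℕ := ⌈((f a : ℝ) + 1) * 2 / ε⌉₊ + 1 with hN
  refine ⟨N, fun n hn => ?_⟩
  have hn1 : 1 ≤ n := le_trans (Nat.succ_le_succ (Nat.zero_le _)) hn
  have hnR : (0:ℝ) < n := by exact_mod_cast hn1
  have hb : (cnt B n : ℝ)/n ≤ ((f a : ℝ) + 1)/n + 1/a := by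
    have h1 : (cnt B n : ℝ) ≤ (f a : ℝ) + ((n/a : ℕ) : ℝ) + 1 := by
      have := hcnt n
      push_cast
      exact_mod_cast this
    have h2 : ((n/a : ℕ) : ℝ) ≤ (n:ℝ)/a := Nat.cast_div_le
    have h3 : (cnt B n : ℝ)/n ≤ ((f a : ℝ) + (n:ℝ)/a + 1)/n := by
      gcongr
      linarith
    have heq : ((f a : ℝ) + (n:ℝ)/a + 1)/n = ((f a : ℝ) + 1)/n + 1/a := by
      field_simp
      ring
    linarith [h3, heq.le, heq.ge]
  have hNb : ((f a : ℝ) + 1)/n < ε/2 := by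
    have hceil : ((f a : ℝ) + 1) * 2 / ε ≤ ⌈((f a : ℝ) + 1) * 2 / ε⌉₊ := Nat.le_ceil _
    have hNn : (N:ℝ) ≤ n := by exact_mod_cast hn
    have hNval : (⌈((f a : ℝ) + 1) * 2 / ε⌉₊ : ℝ) + 1 ≤ N := by
      rw [hN]; push_cast; linarith
    have hlt : ((f a : ℝ) + 1) * 2 / ε < n := by linarith
    have hlt2 : ((f a : ℝ) + 1) * 2 < n * ε := (div_lt_iff₀ hε).mp hlt
    rw [div_lt_iff₀ hnR]
    nlinarith
  have hnn : (0:ℝ) ≤ (cnt B n : ℝ)/n := by positivity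
  rw [Real.dist_eq, sub_zero, abs_of_nonneg hnn]
  linarith
end

section
/- A set B ⊆ ℕ admits a pair of sparseness rates if and only if B is finite or, when enumerated increasingly as b_1 < b_2 < ..., satisfies lim_{j→∞} b_{j+1}/b_j = ∞. -/
open Filter Set Pointwise

/-!
Both sides are equivalent to an enumeration-free form of high sparseness: for every `c`, beyond
some threshold every element `b` of `B` is followed in `B` only by elements `≥ c * b`.
A PSR `(f, g)` gives this by testing its gap condition at `a = N * b`, where `f a < a / N = b`,
so that the next element is at least `(N + 1) * b`. Conversely, take `g = 0` and let `f a` be the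
least threshold beyond which consecutive elements of `B` are at least `a` apart; the ratio
`1 + 1 / ε` bounds it by `m₀ + ε * a`, hence `f a / a → 0`.
-/

open Asymptotics Topology

def IsSuperLacunary (B : Set ℕ) : Prop :=
  ∀ c : ℝ, ∃ m, ∀ bt ∈ B, ∀ bs ∈ B, m < bt → bt < bs → c * bt ≤ bs

lemma isSuperLacunary_of_finite {B : Set ℕ} (hB : B.Finite) : IsSuperLacunary B := by
  obtain ⟨m, hm⟩ := hB.bddAbove
  exact fun _ ↦ ⟨m, fun bt hbt _ _ hmbt _ ↦ absurd (hm hbt) hmbt.not_ge⟩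

section Enumeration

variable {B : Set ℕ}

lemma enum_strictMono (hB : B.Infinite) : StrictMono (enum B) :=
  Nat.nth_strictMono hB

lemma enum_mem (hB : B.Infinite) (j : ℕ) : enum B j ∈ B :=
  Nat.nth_mem_of_infinite hB j

lemma enum_succ_le_of_enum_lt {j b : ℕ} (hb : b ∈ B) (h : enum B j < b) :
    enum B (j + 1) ≤ b := by
  by_contra! h'
  exact h.not_ge (Nat.le_nth_of_lt_nth_succ h' hb)

lemma IsSuperLacunary.tendsto_enum_ratio (hL : IsSuperLacunary B) (hB : B.Infinite) :
    Tendsto (fun j ↦ (enum B (j + 1) : ℝ) / enum B j) atTop atTop := by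
  refine tendsto_atTop.mpr fun c ↦ ?_
  obtain ⟨m, hm⟩ := hL c
  filter_upwards [(enum_strictMono hB).tendsto_atTop.eventually_gt_atTop m] with j hj
  have hpos : (0 : ℝ) < enum B j := by exact_mod_cast (Nat.zero_le m).trans_lt hj
  rw [le_div_iff₀ hpos]
  exact hm _ (enum_mem hB j) _ (enum_mem hB (j + 1)) hj (enum_strictMono hB j.lt_succ_self)

lemma isSuperLacunary_of_tendsto_enum_ratio
    (ht : Tendsto (fun j ↦ (enum B (j + 1) : ℝ) / enum B j) atTop atTop) :
    IsSuperLacunary B := by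
  rcases B.finite_or_infinite with hB | hB
  · exact isSuperLacunary_of_finite hB
  intro c
  obtain ⟨J, hJ⟩ := (tendsto_atTop.mp ht c).exists_forall_of_atTop
  refine ⟨enum B J, fun bt hbt bs hbs hJbt hbtbs ↦ ?_⟩
  obtain ⟨j, rfl⟩ := Nat.subset_range_nth hbt
  have hjJ : J < j := (enum_strictMono hB).lt_iff_lt.mp hJbt
  have hpos : (0 : ℝ) < enum B j := by exact_mod_cast (Nat.zero_le _).trans_lt hJbt
  calc c * enum B j ≤ enum B (j + 1) := (le_div_iff₀ hpos).mp (hJ j hjJ.le)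
    _ ≤ bs := by exact_mod_cast enum_succ_le_of_enum_lt hbs hbtbs

lemma highlySparse_iff_isSuperLacunary : HighlySparse B ↔ IsSuperLacunary B := by
  refine ⟨fun h ↦ h.elim isSuperLacunary_of_finite isSuperLacunary_of_tendsto_enum_ratio,
    fun hL ↦ ?_⟩
  rcases B.finite_or_infinite with hB | hB
  · exact Or.inl hB
  · exact Or.inr (hL.tendsto_enum_ratio hB)

end Enumeration

lemma IsPSR.isSuperLacunary {B : Set ℕ} {f : ℕ → ℕ} {g : ℕ → ℝ} (h : IsPSR B f g) :
    IsSuperLacunary B := by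
  obtain ⟨-, -, hg0, hf0, hgap⟩ := h
  intro c
  set N := ⌈c⌉₊ + 1
  have hN : (0 : ℝ) < N := by positivity
  obtain ⟨A, hA⟩ := ((hf0.eventually_lt_const (inv_pos.2 hN)).and hgap).exists_forall_of_atTop
  refine ⟨A, fun bt hbt bs hbs hAbt hbtbs ↦ ?_⟩
  obtain ⟨hfa, hgapa⟩ := hA (N * bt) (hAbt.le.trans (Nat.le_mul_of_pos_left _ ⌈c⌉₊.succ_pos))
  have hbt_pos : (0 : ℝ) < bt := by exact_mod_cast (Nat.zero_le A).trans_lt hAbt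
  have hf_lt : f (N * bt) < bt := by
    rw [Nat.cast_mul, div_lt_iff₀ (by positivity), inv_mul_cancel_left₀ hN.ne'] at hfa
    exact_mod_cast hfa
  have hsep := hgapa bt bs hbt hbs hf_lt hbtbs
  push_cast at hsep
  calc c * bt ≤ N * bt := by gcongr; exact (Nat.le_ceil c).trans (by simp [N])
    _ ≤ bs := by linarith [hg0 (N * bt)]

lemma tendsto_div_natCast_nhds_zero_of_le_add_mul {u : ℕ → ℝ}
    (h : ∀ ε > 0, ∃ C, ∀ a, ‖u a‖ ≤ C + ε * a) :
    Tendsto (fun a ↦ u a / a) atTop (𝓝 0) := by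
  refine IsLittleO.tendsto_div_nhds_zero (isLittleO_iff.mpr fun ε hε ↦ ?_)
  obtain ⟨C, hC⟩ := h (ε / 2) (half_pos hε)
  filter_upwards [tendsto_natCast_atTop_atTop.eventually_ge_atTop (2 * C / ε)] with a ha
  rw [div_le_iff₀' hε] at ha
  rw [Real.norm_natCast]
  linarith [hC a]

def GapsAbove (B : Set ℕ) (a m : ℕ) : Prop :=
  ∀ bt ∈ B, ∀ bs ∈ B, m < bt → bt < bs → a + bt ≤ bs

lemma GapsAbove.of_le {B : Set ℕ} {a a' m : ℕ} (h : GapsAbove B a m) (ha : a' ≤ a) :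
    GapsAbove B a' m :=
  fun bt hbt bs hbs hm hlt ↦ (Nat.add_le_add_right ha bt).trans (h bt hbt bs hbs hm hlt)

noncomputable def gapThreshold (B : Set ℕ) (a : ℕ) : ℕ :=
  sInf {m | GapsAbove B a m}

namespace IsSuperLacunary

variable {B : Set ℕ}

lemma exists_gapsAbove_add_floor (hL : IsSuperLacunary B) {ε : ℝ} (hε : 0 < ε) :
    ∃ m₀, ∀ a, GapsAbove B a (m₀ + ⌊ε * a⌋₊) := by
  obtain ⟨m₀, hm₀⟩ := hL (1 + ε⁻¹)
  refine ⟨m₀, fun a bt hbt bs hbs hm hlt ↦ ?_⟩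
  have hratio := hm₀ bt hbt bs hbs (by omega) hlt
  have ha : ε * a < bt := (Nat.floor_lt (by positivity)).mp (by omega)
  have ha' : (a : ℝ) < ε⁻¹ * bt := by
    rw [← div_eq_inv_mul, lt_div_iff₀ hε]; linarith
  exact_mod_cast (by linarith : (a : ℝ) + bt ≤ bs)

lemma gapsAbove_gapThreshold (hL : IsSuperLacunary B) (a : ℕ) :
    GapsAbove B a (gapThreshold B a) :=
  Nat.sInf_mem (s := {m | GapsAbove B a m}) <|
    (hL.exists_gapsAbove_add_floor one_pos).elim fun _ h ↦ ⟨_, h a⟩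

lemma monotone_gapThreshold (hL : IsSuperLacunary B) : Monotone (gapThreshold B) :=
  fun _ _ ha ↦ Nat.sInf_le ((hL.gapsAbove_gapThreshold _).of_le ha)

lemma tendsto_gapThreshold_div (hL : IsSuperLacunary B) :
    Tendsto (fun a ↦ (gapThreshold B a : ℝ) / a) atTop (𝓝 0) := by
  refine tendsto_div_natCast_nhds_zero_of_le_add_mul fun ε hε ↦ ?_
  obtain ⟨m₀, hm₀⟩ := hL.exists_gapsAbove_add_floor hε
  refine ⟨m₀, fun a ↦ ?_⟩
  calc ‖(gapThreshold B a : ℝ)‖ = gapThreshold B a := Real.norm_natCast _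
    _ ≤ (m₀ + ⌊ε * a⌋₊ : ℕ) := by exact_mod_cast Nat.sInf_le (hm₀ a)
    _ ≤ m₀ + ε * a := by push_cast; linarith [Nat.floor_le (by positivity : 0 ≤ ε * a)]

lemma isPSR (hL : IsSuperLacunary B) : IsPSR B (gapThreshold B) 0 := by
  refine ⟨hL.monotone_gapThreshold, monotone_const, fun _ ↦ le_rfl, hL.tendsto_gapThreshold_div,
    Eventually.of_forall fun a bt bs hbt hbs hm hlt ↦ ?_⟩
  have := hL.gapsAbove_gapThreshold a bt hbt bs hbs hm hlt
  simp only [Pi.zero_apply, add_zero, le_sub_iff_add_le]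
  exact_mod_cast this

end IsSuperLacunary

theorem stmt7 (B : Set ℕ) :
    (∃ f : ℕ → ℕ, ∃ g : ℕ → ℝ, IsPSR B f g) ↔ HighlySparse B := by
  rw [highlySparse_iff_isSuperLacunary]
  exact ⟨fun ⟨_, _, h⟩ ↦ h.isSuperLacunary, fun hL ↦ ⟨_, _, hL.isPSR⟩⟩
end

section
/- Given any increasing unbounded function f: ℕ → ℕ with f(a)/a → 0 as a → ∞ and any increasing function g: ℕ → ℝ_{≥0}, there exists an infinite set B ⊆ ℕ such that (f, g) is a pair of sparseness rates of B. -/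
open Filter Set Pointwise

/-- A bound beyond which `f` is at least `c`. -/
noncomputable def Abd (f : ℕ → ℕ) (c : ℕ) : ℕ := sInf {N | ∀ a ≥ N, c ≤ f a}

lemma Abd_le (f : ℕ → ℕ) (hfu : Tendsto f atTop atTop) {c a : ℕ} (h : f a < c) :
    a ≤ Abd f c := by
  obtain ⟨N, hN⟩ := (hfu.eventually_ge_atTop c).exists_forall_of_atTop
  have hmem : Abd f c ∈ {N | ∀ a ≥ N, c ≤ f a} := Nat.sInf_mem ⟨N, hN⟩
  by_contra hc
  exact absurd (hmem a (le_of_not_ge hc)) (not_le.mpr h)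

/-- The sparse sequence. -/
noncomputable def bseq (f : ℕ → ℕ) (g : ℕ → ℝ) : ℕ → ℕ
  | 0 => 0
  | n + 1 => bseq f g n + Abd f (bseq f g n) + ⌈g (Abd f (bseq f g n))⌉₊ + 1

lemma bseq_strictMono (f : ℕ → ℕ) (g : ℕ → ℝ) : StrictMono (bseq f g) :=
  strictMono_nat_of_lt_succ (fun n => by simp [bseq]; omega)

theorem stmt17 (f : ℕ → ℕ) (g : ℕ → ℝ) (hf : Monotone f)
    (hfu : Tendsto f atTop atTop)
    (hf0 : Tendsto (fun a => (f a : ℝ) / a) atTop (nhds 0))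
    (hg : Monotone g) (hg0 : ∀ a, 0 ≤ g a) :
    ∃ B : Set ℕ, B.Infinite ∧ IsPSR B f g := by
  refine ⟨Set.range (bseq f g),
    Set.infinite_range_of_injective (bseq_strictMono f g).injective,
    hf, hg, hg0, hf0, Filter.Eventually.of_forall ?_⟩
  rintro a bt bs ⟨i, rfl⟩ ⟨j, rfl⟩ hfa hlt
  have hij : i < j := (bseq_strictMono f g).lt_iff_lt.mp hlt
  have h1 : bseq f g (i + 1) ≤ bseq f g j := (bseq_strictMono f g).monotone hij
  have ha : a ≤ Abd f (bseq f g i) := Abd_le f hfu hfa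
  have key : (a : ℝ) + g a ≤ (bseq f g (i + 1) : ℝ) - bseq f g i := by
    have h2 : (g a : ℝ) ≤ ⌈g (Abd f (bseq f g i))⌉₊ :=
      le_trans (hg ha) (Nat.le_ceil _)
    have h3 : bseq f g (i + 1) = bseq f g i + Abd f (bseq f g i)
        + ⌈g (Abd f (bseq f g i))⌉₊ + 1 := rfl
    rw [h3]
    push_cast
    have : (a : ℝ) ≤ Abd f (bseq f g i) := by exact_mod_cast ha
    linarith
  have h1' : (bseq f g (i + 1) : ℝ) ≤ bseq f g j := by exact_mod_cast h1
  linarith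
end
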